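/- arXiv:1611.08244 — 7 statements merged into one kernel-verified Lean document; each statement's English description precedes it below -/
import Mathlib

section
/- For every positive integer m: if there exist positive integers k and i with m = k·3^i + a_i, then m appears exactly twice in the B-sequence, and otherwise m appears exactly once. Moreover the B-sequence is monotone increasing: B(n) ≤ B(n+1) for all n ≥ 1. -/
/-!
A positive integer `m` has a witness according to its residue mod 3: always if `m ≡ 0` (and
`m ≥ 6`), never if `m ≡ 1`, and if `m ≡ 2` exactly when `(m + 1) / 3` has one. Let `dup m ∈ {0, 1}`
be the witness indicator. The counting function `R` satisfies `R (m + 1) = R m + dup m` and the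
self-similarity `R m = (m - 4) / 3 + R (m / 3 + 1)`. Hence the sequence `bSeq` listing every
`m ≥ 1` in order, `1 + dup m` times, first takes the value `m` at `firstPos m = m + R m`, and the
self-similarity puts the three inner indices `n - bSeq (n - j)` of the recursion, for `n` in the
block of `m`, within two of `firstPos (m / 3 + 1)`; checking the residues of `m` shows that `bSeq`
satisfies the recursion, so every B-sequence equals `bSeq`.
-/

/-- The auxiliary sequence: `a 1 = 3`, `a i = 3 * a (i-1) - 1` for `i ≥ 2`. -/
def a : ℕ → ℕ
  | 0 => 0
  | 1 => 3
  | n + 2 => 3 * a (n + 1) - 1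

/-- `R(m, i) = max(0, ⌊(m − a i − 1)/3^i⌋)` (truncated ℕ-subtraction gives the max). -/
def Rmi (m i : ℕ) : ℕ := (m - a i - 1) / 3 ^ i

/-- `R(m) = ∑_{i=1}^∞ R(m, i)`; all terms with `i > m` vanish, so a finite sum suffices. -/
def R (m : ℕ) : ℕ := ∑ i ∈ Finset.Icc 1 m, Rmi m i

/-- `m` has a witness pair `(k, i)` of positive integers with `m = k·3^i + a i`. -/
def HasWitness (m : ℕ) : Prop := ∃ k i : ℕ, 1 ≤ k ∧ 1 ≤ i ∧ m = k * 3 ^ i + a i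

/-- `B` is the `B`-sequence: `B 0 = 0`, `B n = n` for `1 ≤ n ≤ 5`, and
`B n = B (n - B (n-1)) + B (n - B (n-2)) + B (n - B (n-3))` for `n ≥ 6`. -/
def IsBSeq (B : ℕ → ℕ) : Prop :=
  B 0 = 0 ∧ (∀ n, 1 ≤ n → n ≤ 5 → B n = n) ∧
    ∀ n, 6 ≤ n → B n = B (n - B (n - 1)) + B (n - B (n - 2)) + B (n - B (n - 3))

lemma a_succ {i : ℕ} (hi : 1 ≤ i) : a (i + 1) = 3 * a i - 1 := by
  obtain ⟨j, rfl⟩ := Nat.exists_eq_add_of_le' hi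
  rfl

lemma add_two_le_a {i : ℕ} (hi : 1 ≤ i) : i + 2 ≤ a i := by
  induction i, hi using Nat.le_induction with
  | base => decide
  | succ i hi ih => rw [a_succ hi]; omega

lemma a_mod_three {i : ℕ} (hi : 2 ≤ i) : a i % 3 = 2 := by
  obtain ⟨j, rfl⟩ := Nat.exists_eq_add_of_le' hi
  have := add_two_le_a (i := j + 1) (by omega)
  rw [a_succ (by omega)]
  omega

lemma three_mul_sub_one_eq {k i : ℕ} (hi : 1 ≤ i) :
    3 * (k * 3 ^ i + a i) - 1 = k * 3 ^ (i + 1) + a (i + 1) := by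
  have := add_two_le_a hi
  rw [a_succ hi, show k * 3 ^ (i + 1) = 3 * (k * 3 ^ i) by ring]
  omega

lemma HasWitness.six_le {m : ℕ} (h : HasWitness m) : 6 ≤ m := by
  obtain ⟨k, i, hk, hi, rfl⟩ := h
  have : 3 ≤ k * 3 ^ i := Nat.mul_le_mul hk (Nat.le_self_pow (by omega) 3)
  have := add_two_le_a hi
  omega

lemma hasWitness_of_mod_three_eq_zero {m : ℕ} (h6 : 6 ≤ m) (h : m % 3 = 0) : HasWitness m :=
  ⟨m / 3 - 1, 1, by omega, le_rfl, by rw [pow_one, show a 1 = 3 from rfl]; omega⟩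

lemma not_hasWitness_of_mod_three_eq_one {m : ℕ} (h : m % 3 = 1) : ¬HasWitness m := by
  rintro ⟨k, i, -, hi, rfl⟩
  have h3 : k * 3 ^ i % 3 = 0 := by
    rw [Nat.mul_mod, Nat.pow_mod, Nat.mod_self, zero_pow (by omega)]; simp
  obtain rfl | hi2 := hi.eq_or_lt
  · simp [a] at h3 h
  · have := a_mod_three hi2; omega

lemma hasWitness_iff_of_mod_three_eq_two {m : ℕ} (h : m % 3 = 2) :
    HasWitness m ↔ HasWitness ((m + 1) / 3) := by
  constructor
  · rintro ⟨k, i, hk, hi, rfl⟩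
    obtain rfl | hi2 := hi.eq_or_lt
    · simp [a] at h
    obtain ⟨j, hj, rfl⟩ : ∃ j, 1 ≤ j ∧ i = j + 1 := ⟨i - 1, by omega, by omega⟩
    refine ⟨k, j, hk, hj, ?_⟩
    have := three_mul_sub_one_eq (k := k) hj
    omega
  · rintro ⟨k, i, hk, hi, he⟩
    refine ⟨k, i + 1, hk, by omega, ?_⟩
    rw [← three_mul_sub_one_eq hi, ← he]
    omega

open Classical in
noncomputable def dup (m : ℕ) : ℕ := if HasWitness m then 1 else 0

lemma dup_eq_one {m : ℕ} (h : HasWitness m) : dup m = 1 := if_pos h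

lemma dup_eq_zero {m : ℕ} (h : ¬HasWitness m) : dup m = 0 := if_neg h

lemma dup_eq_zero_or_one (m : ℕ) : dup m = 0 ∨ dup m = 1 := by
  unfold dup; split_ifs <;> simp

lemma dup_of_lt_six {m : ℕ} (h : m < 6) : dup m = 0 :=
  dup_eq_zero fun hw => by have := hw.six_le; omega

lemma dup_of_mod_three_eq_zero {m : ℕ} (h6 : 6 ≤ m) (h : m % 3 = 0) : dup m = 1 :=
  dup_eq_one (hasWitness_of_mod_three_eq_zero h6 h)

lemma dup_of_mod_three_eq_one {m : ℕ} (h : m % 3 = 1) : dup m = 0 :=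
  dup_eq_zero (not_hasWitness_of_mod_three_eq_one h)

lemma dup_of_mod_three_eq_two {m : ℕ} (h : m % 3 = 2) : dup m = dup ((m + 1) / 3) := by
  by_cases hw : HasWitness m
  · rw [dup_eq_one hw, dup_eq_one ((hasWitness_iff_of_mod_three_eq_two h).1 hw)]
  · rw [dup_eq_zero hw, dup_eq_zero (mt (hasWitness_iff_of_mod_three_eq_two h).2 hw)]

lemma Rmi_eq_zero {m i : ℕ} (h : m < a i + 1 + 3 ^ i) : Rmi m i = 0 := by
  have : 0 < 3 ^ i := by positivity
  exact Nat.div_eq_of_lt (by omega)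

lemma R_eq_sum_range {m M : ℕ} (hM : m ≤ M) : R m = ∑ i ∈ Finset.range M, Rmi m (i + 1) := by
  rw [R, Finset.range_eq_Ico, Finset.sum_Ico_add' (c := 1)]
  apply Finset.sum_subset
  · intro i; simp only [Finset.mem_Icc, Finset.mem_Ico]; omega
  · intro i hi hi'
    simp only [Finset.mem_Icc, Finset.mem_Ico] at hi hi'
    have := add_two_le_a (i := i) (by omega)
    have : 0 < 3 ^ i := by positivity
    exact Rmi_eq_zero (by omega)

lemma R_eq_zero {m : ℕ} (hm : m ≤ 6) : R m = 0 :=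
  Finset.sum_eq_zero fun i hi => by
    have hi : 1 ≤ i := (Finset.mem_Icc.1 hi).1
    have := add_two_le_a hi
    have : 3 ≤ 3 ^ i := Nat.le_self_pow (by omega) 3
    exact Rmi_eq_zero (by omega)

lemma Rmi_succ {m i : ℕ} (hi : 1 ≤ i) : Rmi m (i + 1) = Rmi (m / 3 + 1) i := by
  have := add_two_le_a hi
  rw [Rmi, Rmi, a_succ hi, pow_succ', ← Nat.div_div_eq_div_mul]
  congr 1
  omega

lemma R_recursion {m : ℕ} (hm : 6 ≤ m) : R m = (m - 4) / 3 + R (m / 3 + 1) := by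
  have hRmi : Rmi m 1 = (m - 4) / 3 := by
    rw [Rmi, pow_one, show a 1 = 3 from rfl]; omega
  rw [R_eq_sum_range (M := m - 1 + 1) (by omega), Finset.sum_range_succ', hRmi,
    R_eq_sum_range (M := m - 1) (by omega), add_comm]
  congr 1
  exact Finset.sum_congr rfl fun i _ => Rmi_succ (by omega)

lemma R_succ (m : ℕ) : R (m + 1) = R m + dup m := by
  induction m using Nat.strong_induction_on with
  | _ m ih =>
    rcases Nat.lt_or_ge m 6 with h6 | h6
    · rw [R_eq_zero (by omega), R_eq_zero (by omega), dup_of_lt_six h6]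
    rw [R_recursion h6, R_recursion (by omega)]
    rcases (show m % 3 = 0 ∨ m % 3 = 1 ∨ m % 3 = 2 by omega) with hr | hr | hr
    · rw [dup_of_mod_three_eq_zero h6 hr, show (m + 1) / 3 = m / 3 by omega]; omega
    · rw [dup_of_mod_three_eq_one hr, show (m + 1) / 3 = m / 3 by omega]; omega
    · rw [dup_of_mod_three_eq_two hr, show (m + 1) / 3 = m / 3 + 1 by omega,
        ih (m / 3 + 1) (by omega)]
      omega

def firstPos (m : ℕ) : ℕ := m + R m

lemma firstPos_succ (m : ℕ) : firstPos (m + 1) = firstPos m + 1 + dup m := by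
  rw [firstPos, firstPos, R_succ]; ring

lemma le_firstPos (m : ℕ) : m ≤ firstPos m := Nat.le_add_right m (R m)

lemma firstPos_of_le_six {m : ℕ} (hm : m ≤ 6) : firstPos m = m := by
  rw [firstPos, R_eq_zero hm, add_zero]

lemma firstPos_strictMono : StrictMono firstPos :=
  strictMono_nat_of_lt_succ fun m => by rw [firstPos_succ]; omega

lemma firstPos_recursion {m : ℕ} (hm : 6 ≤ m) :
    firstPos m + (m / 3 + 1) = firstPos (m / 3 + 1) + m + (m - 4) / 3 := by
  rw [firstPos, firstPos, R_recursion hm]; ring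

def bSeq (n : ℕ) : ℕ := Nat.findGreatest (fun m => firstPos m ≤ n) n

lemma le_bSeq_iff {m n : ℕ} : m ≤ bSeq n ↔ firstPos m ≤ n := by
  refine ⟨fun h => ?_, fun h => Nat.le_findGreatest ((le_firstPos m).trans h) h⟩
  have hspec : firstPos (bSeq n) ≤ n :=
    Nat.findGreatest_spec (P := fun m => firstPos m ≤ n) (Nat.zero_le n)
      (by rw [firstPos_of_le_six (by omega)]; exact Nat.zero_le n)
  exact (firstPos_strictMono.monotone h).trans hspec

lemma bSeq_eq_iff {m n : ℕ} : bSeq n = m ↔ firstPos m ≤ n ∧ n < firstPos m + 1 + dup m := by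
  rw [← firstPos_succ, ← not_le, ← le_bSeq_iff, ← le_bSeq_iff]
  omega

lemma bSeq_monotone : Monotone bSeq :=
  fun _ _ h => Nat.findGreatest_mono (fun _ hm => hm.trans h) h

lemma bSeq_firstPos_add {m t : ℕ} (ht : t ≤ dup m) : bSeq (firstPos m + t) = m :=
  bSeq_eq_iff.2 ⟨by omega, by omega⟩

lemma bSeq_firstPos (m : ℕ) : bSeq (firstPos m) = m :=
  bSeq_firstPos_add (Nat.zero_le _)

lemma bSeq_firstPos_sub_one {m : ℕ} (hm : 1 ≤ m) : bSeq (firstPos m - 1) = m - 1 := by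
  have h := firstPos_succ (m - 1)
  rw [Nat.sub_add_cancel hm] at h
  rw [show firstPos m - 1 = firstPos (m - 1) + dup (m - 1) by omega, bSeq_firstPos_add le_rfl]

lemma bSeq_firstPos_sub_two {m : ℕ} (hm : 2 ≤ m) :
    bSeq (firstPos m - 2) = m - 2 + dup (m - 1) := by
  have h := firstPos_succ (m - 1)
  rw [Nat.sub_add_cancel (by omega)] at h
  rcases dup_eq_zero_or_one (m - 1) with hd | hd
  · rw [show firstPos m - 2 = firstPos (m - 1) - 1 by omega, bSeq_firstPos_sub_one (by omega)]
    omega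
  · rw [show firstPos m - 2 = firstPos (m - 1) by omega, bSeq_firstPos]
    omega

lemma bSeq_firstPos_sub_three {m : ℕ} (hm : 3 ≤ m) :
    bSeq (firstPos m - 3) = m - 3 + max (dup (m - 1)) (dup (m - 2)) := by
  have h := firstPos_succ (m - 1)
  rw [Nat.sub_add_cancel (by omega)] at h
  have := dup_eq_zero_or_one (m - 2)
  rcases dup_eq_zero_or_one (m - 1) with hd | hd
  · rw [show firstPos m - 3 = firstPos (m - 1) - 2 by omega, bSeq_firstPos_sub_two (by omega),
      show m - 1 - 1 = m - 2 by omega]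
    omega
  · rw [show firstPos m - 3 = firstPos (m - 1) - 1 by omega, bSeq_firstPos_sub_one (by omega)]
    omega

lemma bSeq_firstPos_add_one (m : ℕ) : bSeq (firstPos m + 1) = m + 1 - dup m := by
  rcases dup_eq_zero_or_one m with hd | hd
  · rw [show firstPos m + 1 = firstPos (m + 1) by rw [firstPos_succ, hd], bSeq_firstPos, hd,
      Nat.sub_zero]
  · rw [bSeq_firstPos_add hd.ge, hd]
    omega

lemma dup_sub_one_of_mod_three_eq_zero {m : ℕ} (hm : 1 ≤ m) (hr : m % 3 = 0) :
    dup (m - 1) = dup (m / 3) := by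
  rw [dup_of_mod_three_eq_two (by omega), show (m - 1 + 1) / 3 = m / 3 by omega]

lemma bSeq_sum_at_firstPos {m : ℕ} (hm : 6 ≤ m) :
    bSeq (firstPos m - bSeq (firstPos m - 1)) + bSeq (firstPos m - bSeq (firstPos m - 2)) +
      bSeq (firstPos m - bSeq (firstPos m - 3)) = m := by
  have hN := firstPos_recursion hm
  have := le_firstPos (m / 3 + 1)
  rw [bSeq_firstPos_sub_one (by omega), bSeq_firstPos_sub_two (by omega),
    bSeq_firstPos_sub_three (by omega)]
  -- `hN` says `firstPos m - m = firstPos q - 3 + [m % 3 ≠ 0]` for `q = m / 3 + 1`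
  rcases (show m % 3 = 0 ∨ m % 3 = 1 ∨ m % 3 = 2 by omega) with hr | hr | hr
  · have hp := firstPos_succ (m / 3)
    have := dup_eq_zero_or_one (m / 3)
    rw [dup_sub_one_of_mod_three_eq_zero (by omega) hr,
      dup_of_mod_three_eq_one (m := m - 2) (by omega),
      show firstPos m - (m - 1) = firstPos (m / 3 + 1) - 2 by omega,
      show firstPos m - (m - 2 + dup (m / 3)) = firstPos (m / 3) by omega,
      show firstPos m - (m - 3 + max (dup (m / 3)) 0) = firstPos (m / 3) + 1 by omega,
      bSeq_firstPos_sub_two (by omega), Nat.add_sub_cancel, bSeq_firstPos, bSeq_firstPos_add_one]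
    omega
  · have := dup_eq_zero_or_one (m - 2)
    rw [dup_of_mod_three_eq_zero (m := m - 1) (by omega) (by omega),
      show firstPos m - (m - 1) = firstPos (m / 3 + 1) - 1 by omega,
      show firstPos m - (m - 2 + 1) = firstPos (m / 3 + 1) - 1 by omega,
      show firstPos m - (m - 3 + max 1 (dup (m - 2))) = firstPos (m / 3 + 1) by omega,
      bSeq_firstPos_sub_one (by omega), bSeq_firstPos]
    omega
  · rw [dup_of_mod_three_eq_one (m := m - 1) (by omega),
      dup_of_mod_three_eq_zero (m := m - 2) (by omega) (by omega),
      show firstPos m - (m - 1) = firstPos (m / 3 + 1) - 1 by omega,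
      show firstPos m - (m - 2 + 0) = firstPos (m / 3 + 1) by omega,
      show firstPos m - (m - 3 + max 0 1) = firstPos (m / 3 + 1) by omega,
      bSeq_firstPos_sub_one (by omega), bSeq_firstPos]
    omega

lemma bSeq_sum_at_firstPos_add_one {m : ℕ} (hm : 6 ≤ m) (hd : dup m = 1) :
    bSeq (firstPos m + 1 - bSeq (firstPos m + 1 - 1)) +
      bSeq (firstPos m + 1 - bSeq (firstPos m + 1 - 2)) +
      bSeq (firstPos m + 1 - bSeq (firstPos m + 1 - 3)) = m := by
  have hN := firstPos_recursion hm
  have := le_firstPos (m / 3 + 1)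
  rw [Nat.add_sub_cancel, show firstPos m + 1 - 2 = firstPos m - 1 by omega,
    show firstPos m + 1 - 3 = firstPos m - 2 by omega, bSeq_firstPos,
    bSeq_firstPos_sub_one (by omega), bSeq_firstPos_sub_two (by omega)]
  rcases (show m % 3 = 0 ∨ m % 3 = 1 ∨ m % 3 = 2 by omega) with hr | hr | hr
  · have hp := firstPos_succ (m / 3)
    have := dup_eq_zero_or_one (m / 3)
    rw [dup_sub_one_of_mod_three_eq_zero (by omega) hr,
      show firstPos m + 1 - m = firstPos (m / 3 + 1) - 2 by omega,
      show firstPos m + 1 - (m - 1) = firstPos (m / 3 + 1) - 1 by omega,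
      show firstPos m + 1 - (m - 2 + dup (m / 3)) = firstPos (m / 3) + 1 by omega,
      bSeq_firstPos_sub_two (by omega), bSeq_firstPos_sub_one (by omega), Nat.add_sub_cancel,
      bSeq_firstPos_add_one]
    omega
  · rw [dup_of_mod_three_eq_one hr] at hd
    omega
  · rw [dup_of_mod_three_eq_two hr, show (m + 1) / 3 = m / 3 + 1 by omega] at hd
    rw [dup_of_mod_three_eq_one (m := m - 1) (by omega),
      show firstPos m + 1 - m = firstPos (m / 3 + 1) - 1 by omega,
      show firstPos m + 1 - (m - 1) = firstPos (m / 3 + 1) by omega,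
      show firstPos m + 1 - (m - 2 + 0) = firstPos (m / 3 + 1) + 1 by omega,
      bSeq_firstPos_sub_one (by omega), bSeq_firstPos, bSeq_firstPos_add_one, hd]
    omega

lemma bSeq_recursion {n : ℕ} (hn : 6 ≤ n) :
    bSeq n = bSeq (n - bSeq (n - 1)) + bSeq (n - bSeq (n - 2)) + bSeq (n - bSeq (n - 3)) := by
  obtain ⟨m, hnm⟩ : ∃ m, bSeq n = m := ⟨_, rfl⟩
  have hm : 6 ≤ m := hnm ▸ le_bSeq_iff.2 (by rw [firstPos_of_le_six le_rfl]; exact hn)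
  obtain ⟨hlo, hhi⟩ := bSeq_eq_iff.1 hnm
  rw [hnm]
  rcases (show n = firstPos m ∨ n = firstPos m + 1 ∧ dup m = 1 by
    have := dup_eq_zero_or_one m; omega) with rfl | ⟨rfl, hd⟩
  · exact (bSeq_sum_at_firstPos hm).symm
  · exact (bSeq_sum_at_firstPos_add_one hm hd).symm

lemma bSeq_of_le_six {n : ℕ} (hn : n ≤ 6) : bSeq n = n := by
  simpa only [firstPos_of_le_six hn] using bSeq_firstPos n

lemma one_le_bSeq {n : ℕ} (hn : 1 ≤ n) : 1 ≤ bSeq n :=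
  le_bSeq_iff.2 (by rwa [firstPos_of_le_six (by norm_num)])

lemma encard_setOf_bSeq_eq {m : ℕ} (hm : 1 ≤ m) :
    {n : ℕ | 1 ≤ n ∧ bSeq n = m}.encard = dup m + 1 := by
  have := le_firstPos m
  have hset : {n : ℕ | 1 ≤ n ∧ bSeq n = m} = Set.Icc (firstPos m) (firstPos m + dup m) := by
    ext n
    simp only [Set.mem_ofPred_eq, Set.mem_Icc, bSeq_eq_iff]
    omega
  rw [hset, ← Finset.coe_Icc, Set.encard_coe_eq_coe_finsetCard, Nat.card_Icc]
  norm_cast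
  omega

lemma IsBSeq.eq_bSeq {B : ℕ → ℕ} (hB : IsBSeq B) : B = bSeq := by
  obtain ⟨h0, hsmall, hrec⟩ := hB
  funext n
  induction n using Nat.strong_induction_on with
  | _ n ih =>
    rcases Nat.lt_or_ge n 6 with hn | hn
    · rw [bSeq_of_le_six hn.le]
      rcases Nat.eq_zero_or_pos n with rfl | hpos
      exacts [h0, hsmall n hpos (by omega)]
    have h1 := one_le_bSeq (n := n - 1) (by omega)
    have h2 := one_le_bSeq (n := n - 2) (by omega)
    have h3 := one_le_bSeq (n := n - 3) (by omega)
    rw [hrec n hn, bSeq_recursion hn, ih (n - 1) (by omega), ih (n - 2) (by omega),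
      ih (n - 3) (by omega), ih (n - bSeq (n - 1)) (by omega), ih (n - bSeq (n - 2)) (by omega),
      ih (n - bSeq (n - 3)) (by omega)]

/-- a positive integer `m` appears exactly twice in the B-sequence if it has a
witness pair and exactly once otherwise; moreover the B-sequence is monotone increasing. -/
theorem stmt_1 (B : ℕ → ℕ) (hB : IsBSeq B) :
    (∀ m : ℕ, 1 ≤ m →
      ((∃ k i : ℕ, 1 ≤ k ∧ 1 ≤ i ∧ m = k * 3 ^ i + a i) →
        {n : ℕ | 1 ≤ n ∧ B n = m}.encard = 2) ∧
      (¬(∃ k i : ℕ, 1 ≤ k ∧ 1 ≤ i ∧ m = k * 3 ^ i + a i) →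
        {n : ℕ | 1 ≤ n ∧ B n = m}.encard = 1)) ∧
    (∀ n : ℕ, 1 ≤ n → B n ≤ B (n + 1)) := by
  obtain rfl := hB.eq_bSeq
  refine ⟨fun m hm => ⟨fun hw => ?_, fun hw => ?_⟩, fun n _ => bSeq_monotone n.le_succ⟩
  · rw [encard_setOf_bSeq_eq hm, dup_eq_one hw]; rfl
  · rw [encard_setOf_bSeq_eq hm, dup_eq_zero hw]; rfl
end

section
/- For every positive integer m, there is at most one integer i ≥ 1 such that m ≡ a_i (mod 3^i). -/
/-!
Writing `a (n + 2) = a (n + 1) + 5 * 3 ^ n`, the terms `a j` with `j > i` are all congruent to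
`a (i + 1)` modulo `3 ^ i`, while `a (i + 1) - a i = 5 * 3 ^ (i - 1)` is not divisible by `3 ^ i`.
So `m ≡ a j [MOD 3 ^ j]` forces `m ≢ a i [MOD 3 ^ i]`.
-/

lemma two_mul_a_succ (n : ℕ) : 2 * a (n + 1) = 5 * 3 ^ n + 1 := by
  induction n with
  | zero => simp [a]
  | succ k ih =>
    rw [a, pow_succ]
    omega

lemma a_add_two (n : ℕ) : a (n + 2) = a (n + 1) + 5 * 3 ^ n := by
  have := two_mul_a_succ n
  rw [a]
  omega

lemma a_add_modEq (i d : ℕ) : a (i + d + 1) ≡ a (i + 1) [MOD 3 ^ i] := by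
  induction d with
  | zero => rfl
  | succ d ih =>
    have hdvd : 3 ^ i ∣ 5 * 3 ^ (i + d) := (pow_dvd_pow 3 (Nat.le_add_right i d)).mul_left 5
    rw [show i + (d + 1) + 1 = i + d + 2 by ring, a_add_two]
    simpa only [add_zero] using ((Nat.modEq_zero_iff_dvd.2 hdvd).add_left _).trans ih

lemma a_add_two_not_modEq (n : ℕ) : ¬ a (n + 2) ≡ a (n + 1) [MOD 3 ^ (n + 1)] := by
  intro h
  have hdvd : 3 ^ n * 3 ∣ 3 ^ n * 5 := by
    have := (Nat.modEq_iff_dvd' (by rw [a_add_two]; omega)).1 h.symm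
    rwa [a_add_two, Nat.add_sub_cancel_left, pow_succ, mul_comm 5] at this
  exact absurd (Nat.dvd_of_mul_dvd_mul_left (by positivity) hdvd) (by norm_num)

lemma a_not_modEq_of_lt {i j : ℕ} (hi : 1 ≤ i) (hij : i < j) : ¬ a j ≡ a i [MOD 3 ^ i] := by
  obtain ⟨n, rfl⟩ : ∃ n, i = n + 1 := ⟨i - 1, by omega⟩
  obtain ⟨d, rfl⟩ : ∃ d, j = n + 1 + d + 1 := ⟨j - (n + 2), by omega⟩
  exact fun h ↦ a_add_two_not_modEq n ((a_add_modEq (n + 1) d).symm.trans h)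

theorem stmt_2_general (m : ℕ) :
    {i : ℕ | 1 ≤ i ∧ m ≡ a i [MOD 3 ^ i]}.Subsingleton := by
  intro i hi j hj
  by_contra hne
  wlog hij : i < j generalizing i j
  · exact this hj hi (Ne.symm hne) (by omega)
  exact a_not_modEq_of_lt hi.1 hij ((hj.2.of_dvd (pow_dvd_pow 3 hij.le)).symm.trans hi.2)

/-- for every positive integer `m`, there is at most one `i ≥ 1`
with `m ≡ a i (mod 3^i)`. -/
theorem stmt_2 (m : ℕ) (hm : 1 ≤ m) :
    {i : ℕ | 1 ≤ i ∧ m ≡ a i [MOD 3 ^ i]}.Subsingleton :=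
  stmt_2_general m
end

section
/- Let m be a positive multiple of 3. Then m − 1 has a witness if and only if m/3 has a witness. -/
theorem a_pos {i : ℕ} (hi : 1 ≤ i) : 0 < a i := by
  induction i, hi using Nat.le_induction with
  | base => decide
  | succ i hi ih =>
    obtain ⟨j, rfl⟩ := Nat.exists_eq_add_of_le' hi
    show 0 < 3 * a (j + 1) - 1
    omega

theorem a_succ_add_one {i : ℕ} (hi : 1 ≤ i) : a (i + 1) + 1 = 3 * a i := by
  obtain ⟨j, rfl⟩ := Nat.exists_eq_add_of_le' hi
  have ha := a_pos hi
  show 3 * a (j + 1) - 1 + 1 = 3 * a (j + 1)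
  omega

theorem mul_pow_succ_add_a_succ_add_one (k : ℕ) {i : ℕ} (hi : 1 ≤ i) :
    k * 3 ^ (i + 1) + a (i + 1) + 1 = 3 * (k * 3 ^ i + a i) := by
  rw [add_assoc, a_succ_add_one hi]
  ring

/-- Witness `i + 1` of `3 * t - 1` corresponds to witness `i` of `t`; witness `1` is impossible
since `k * 3 + a 1` is divisible by 3. -/
theorem hasWitness_three_mul_sub_one (t : ℕ) : HasWitness (3 * t - 1) ↔ HasWitness t := by
  constructor
  · rintro ⟨k, _ | _ | j, hk, hi, h⟩
    · omega
    · simp only [zero_add, pow_one, a] at h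
      omega
    · have hshift := mul_pow_succ_add_a_succ_add_one k (Nat.le_add_left 1 j)
      exact ⟨k, j + 1, hk, by omega, by omega⟩
  · rintro ⟨k, i, hk, hi, rfl⟩
    have hshift := mul_pow_succ_add_a_succ_add_one k hi
    exact ⟨k, i + 1, hk, by omega, by omega⟩

theorem stmt_6_general (m : ℕ) (h3 : 3 ∣ m) :
    HasWitness (m - 1) ↔ HasWitness (m / 3) := by
  obtain ⟨t, rfl⟩ := h3
  rw [Nat.mul_div_cancel_left t three_pos]
  exact hasWitness_three_mul_sub_one t

/-- for `m` a positive multiple of 3, `m - 1` has a witness iff `m/3` has one. -/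
theorem stmt_6 (m : ℕ) (hm : 1 ≤ m) (h3 : 3 ∣ m) :
    HasWitness (m - 1) ↔ HasWitness (m / 3) :=
  stmt_6_general m h3
end

section
/- The limit as m → ∞ of R(m)/m equals 1/2. -/
lemma a_pos_s9 : ∀ i, 1 ≤ i → 1 ≤ a i
  | 1, _ => by simp [a]
  | (n+2), _ => by
      have := a_pos_s9 (n+1) (by omega)
      show 1 ≤ 3 * a (n+1) - 1
      omega

lemma a_succ_le : ∀ i, a i + 1 ≤ 2 * 3 ^ i
  | 0 => by simp [a]
  | 1 => by simp [a]
  | (n+2) => by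
      have h1 := a_succ_le (n+1)
      have h2 := a_pos_s9 (n+1) (by omega)
      show (3 * a (n+1) - 1) + 1 ≤ 2 * 3 ^ (n+2)
      have h3 : (3:ℕ)^(n+2) = 3 * 3^(n+1) := by ring
      omega

lemma geom_sum_Icc (m : ℕ) :
    ∑ i ∈ Finset.Icc 1 m, ((1:ℝ)/3)^i = 1/2 - 1/2 * (1/3)^m := by
  induction m with
  | zero => simp
  | succ n ih =>
      rw [Finset.sum_Icc_succ_top (by omega), ih]
      ring

lemma Rmi_le (m i : ℕ) : (Rmi m i : ℝ) ≤ (m : ℝ) * (1/3)^i := by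
  have h : Rmi m i * 3 ^ i ≤ m := le_trans (Nat.div_mul_le_self _ _) (by omega)
  have h' : (Rmi m i : ℝ) * 3 ^ i ≤ m := by exact_mod_cast h
  have hp : (0:ℝ) < 3 ^ i := by positivity
  have hm : (m : ℝ) * (1/3)^i = (m : ℝ) / 3 ^ i := by
    rw [div_pow]; ring
  rw [hm, le_div_iff₀ hp]
  exact h'

lemma R_upper (m : ℕ) : (R m : ℝ) ≤ m / 2 := by
  have h1 : (R m : ℝ) ≤ ∑ i ∈ Finset.Icc 1 m, (m : ℝ) * (1/3)^i := by
    rw [R]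
    push_cast
    exact Finset.sum_le_sum fun i _ => Rmi_le m i
  have h2 : ∑ i ∈ Finset.Icc 1 m, (m : ℝ) * (1/3)^i
      = (m : ℝ) * (1/2 - 1/2 * (1/3)^m) := by
    rw [← Finset.mul_sum, geom_sum_Icc]
  have h3 : (0:ℝ) ≤ (m:ℝ) * (1/2 * (1/3)^m) := by positivity
  nlinarith

lemma Rmi_ge (m i : ℕ) (h : 2 * 3 ^ i ≤ m) :
    (m : ℝ) * (1/3)^i - 3 ≤ (Rmi m i : ℝ) := by
  have ha := a_succ_le i
  have hp : 0 < 3 ^ i := Nat.pow_pos (by norm_num)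
  have hlt : m - a i - 1 < Rmi m i * 3 ^ i + 3 ^ i := by
    have := Nat.lt_div_mul_add (a := m - a i - 1) (b := 3 ^ i) hp
    simpa [Rmi] using this
  have hlt' : m < Rmi m i * 3 ^ i + 3 ^ i + (a i + 1) := by omega
  have hltR : (m : ℝ) < ((Rmi m i : ℝ) + 1) * 3 ^ i + 2 * 3 ^ i := by
    have : (m : ℝ) < (Rmi m i : ℝ) * 3 ^ i + 3 ^ i + ((a i : ℝ) + 1) := by
      exact_mod_cast hlt'
    have h2 : ((a i : ℝ) + 1) ≤ 2 * 3 ^ i := by exact_mod_cast ha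
    linarith
  have hpR : (0:ℝ) < 3 ^ i := by positivity
  have hm : (m : ℝ) * (1/3)^i = (m : ℝ) / 3 ^ i := by rw [div_pow]; ring
  rw [hm, sub_le_iff_le_add, div_le_iff₀ hpR]
  nlinarith

lemma R_lower (N m : ℕ) (hm : 2 * 3 ^ N ≤ m) :
    (m : ℝ) * (1/2 - 1/2 * (1/3)^N) - 3 * N ≤ (R m : ℝ) := by
  have h3N : N < 3 ^ N := Nat.lt_pow_self (by norm_num : 1 < 3)
  have hNm : N ≤ m := by omega
  have hsub : Finset.Icc 1 N ⊆ Finset.Icc 1 m := Finset.Icc_subset_Icc_right hNm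
  have h1 : ∑ i ∈ Finset.Icc 1 N, (Rmi m i : ℝ) ≤ (R m : ℝ) := by
    rw [R]
    push_cast
    exact Finset.sum_le_sum_of_subset_of_nonneg hsub (fun i _ _ => by positivity)
  refine le_trans ?_ h1
  have h2 : ∀ i ∈ Finset.Icc 1 N, (m:ℝ) * (1/3)^i - 3 ≤ (Rmi m i : ℝ) := by
    intro i hi
    apply Rmi_ge
    have hiN : i ≤ N := (Finset.mem_Icc.mp hi).2
    have : 3 ^ i ≤ 3 ^ N := Nat.pow_le_pow_right (by norm_num) hiN
    omega
  calc (m:ℝ) * (1/2 - 1/2*(1/3)^N) - 3 * N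
      = ∑ i ∈ Finset.Icc 1 N, ((m:ℝ)*(1/3)^i - 3) := by
        rw [Finset.sum_sub_distrib, ← Finset.mul_sum, geom_sum_Icc,
          Finset.sum_const, Nat.card_Icc]
        simp
        ring
    _ ≤ _ := Finset.sum_le_sum h2

/-- `R m / m → 1/2` as `m → ∞`. -/
theorem stmt_9 :
    Filter.Tendsto (fun m : ℕ => (R m : ℝ) / m) Filter.atTop (nhds (1 / 2)) := by
  rw [Metric.tendsto_atTop]
  intro ε hε
  obtain ⟨N, hN⟩ := exists_pow_lt_of_lt_one hε (by norm_num : (1:ℝ)/3 < 1)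
  obtain ⟨M, hM⟩ := exists_nat_ge (6 * N / ε)
  refine ⟨max (2 * 3 ^ N) M, fun m hm => ?_⟩
  have hm1 : 2 * 3 ^ N ≤ m := le_trans (le_max_left _ _) hm
  have hmM : (M : ℝ) ≤ m := by exact_mod_cast le_trans (le_max_right _ _) hm
  have hm2 : (6 * N / ε : ℝ) ≤ m := le_trans hM hmM
  have hmpos : 0 < m := by
    have : 0 < 2 * 3 ^ N := by positivity
    omega
  have hmR : (0:ℝ) < m := by exact_mod_cast hmpos
  have hup : (R m : ℝ) / m ≤ 1/2 := by
    rw [div_le_iff₀ hmR]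
    have := R_upper m
    linarith
  have hlo := R_lower N m hm1
  have h4 : ((m:ℝ) * (1/2 - 1/2*(1/3)^N) - 3 * N) / m ≤ (R m : ℝ) / m := by
    gcongr
  have h5 : ((m:ℝ) * (1/2 - 1/2*(1/3)^N) - 3 * N) / m
      = (1/2 - 1/2*(1/3)^N) - 3 * N / m := by
    field_simp
  rw [h5] at h4
  have h6 : 3 * (N:ℝ) / m ≤ ε / 2 := by
    rw [div_le_iff₀ hmR]
    rw [div_le_iff₀ hε] at hm2
    linarith
  have h7 : (1:ℝ)/2 * (1/3)^N < ε / 2 := by linarith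
  rw [Real.dist_eq, abs_sub_comm, abs_of_nonneg (by linarith)]
  linarith
end

section
/- Let k ≥ 4 be an integer and set N = (k² + k)/2. Suppose B : ℕ → ℕ satisfies B(0) = 0, B(i) = i for 1 ≤ i ≤ N − 1, and B(n) = ∑_{i=1}^k B(n − B(n−i)) for all n with N ≤ n < N + (N−k)(k+1). Then for all integers q and r with 1 ≤ r ≤ k+1 and −k ≤ q(k+1) + r < (N−k)(k+1), one has B(N + q(k+1) + r) = N + qk + r − 1. -/
/-!
Write `M = N - k = 0 + 1 + ⋯ + (k - 1)`. The solution is `B (M + m) = M + m - ⌊m / (k + 1)⌋`,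
i.e. it climbs by one except for one repeated value in every block of `k + 1`. For this closed
form, `n - B (n - i)` with `n = M + m` equals `i + ⌊(m - i) / (k + 1)⌋`, which lies in the initial
segment where `B` is the identity; summing over `1 ≤ i ≤ k` and using Hermite's identity
`∑_{i=0}^{k} ⌊(m - i) / (k + 1)⌋ = m - k` reproduces the closed form at `n`.
-/

open Finset

theorem Nat.sum_range_succ_sub_div {k m : ℕ} (hkm : k ≤ m) :
    ∑ i ∈ range (k + 1), (m - i) / (k + 1) = m - k := by
  induction m, hkm using Nat.le_induction with
  | base =>
    rw [Nat.sub_self]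
    exact sum_eq_zero fun i _ => Nat.div_eq_of_lt (by omega)
  | succ m hkm ih =>
    have hshift : (m + 1) / (k + 1) = (m - k) / (k + 1) + 1 := by
      rw [← Nat.add_div_right _ k.add_one_pos]; congr 1; omega
    rw [sum_range_succ', Nat.sub_zero, hshift]
    rw [sum_range_succ] at ih
    simp only [Nat.add_sub_add_right]
    omega

theorem Finset.sum_Icc_one_eq_sum_range {M : Type*} [AddCommMonoid M] (f : ℕ → M) (k : ℕ) :
    ∑ i ∈ Icc 1 k, f i = ∑ i ∈ range k, f (i + 1) := by
  rw [← Ico_add_one_right_eq_Icc, sum_Ico_eq_sum_range, Nat.add_sub_cancel]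
  simp only [add_comm]

theorem Nat.add_sub_div_lt {k M m j : ℕ} (hj : 1 ≤ j) (hjk : j ≤ k) (hjm : j ≤ m)
    (hm : m < M * (k + 1) + k) : j + (m - j) / (k + 1) < M + k := by
  rcases hjk.lt_or_eq with hjk | rfl
  · have : (m - j) / (k + 1) < M + 1 :=
      (Nat.div_lt_iff_lt_mul k.add_one_pos).2 (by rw [add_one_mul]; omega)
    omega
  · have : (m - j) / (j + 1) < M := (Nat.div_lt_iff_lt_mul j.add_one_pos).2 (by omega)
    omega

section Recurrence

variable {k M : ℕ} {B : ℕ → ℕ} (hM : ∑ i ∈ range k, i = M) (hM0 : 0 < M)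
  (hinit : ∀ i, 1 ≤ i → i < M + k → B i = i)
  (hrec : ∀ n, M + k ≤ n → n < M + k + M * (k + 1) → B n = ∑ i ∈ Icc 1 k, B (n - B (n - i)))
include hM hM0 hinit hrec

theorem recurrence_apply_eq_sub_div (m : ℕ) (hm : m < M * (k + 1) + k) :
    B (M + m) = M + m - m / (k + 1) := by
  induction m using Nat.strong_induction_on with | _ m ih =>
  rcases Nat.lt_or_ge m k with hmk | hkm
  · rw [Nat.div_eq_of_lt (by omega), Nat.sub_zero]
    exact hinit _ (by omega) (by omega)
  have hterm : ∀ i ∈ range k,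
      B (M + m - B (M + m - (i + 1))) = i + 1 + (m - (i + 1)) / (k + 1) := by
    intro i hi
    rw [mem_range] at hi
    have hlt := Nat.add_sub_div_lt (j := i + 1) (by omega) hi (by omega) hm
    have hB : B (M + m - (i + 1)) = M + (m - (i + 1)) - (m - (i + 1)) / (k + 1) := by
      rw [show M + m - (i + 1) = M + (m - (i + 1)) by omega]
      exact ih _ (by omega) (by omega)
    have hle : (m - (i + 1)) / (k + 1) ≤ m - (i + 1) := Nat.div_le_self _ _
    rw [hB]
    generalize (m - (i + 1)) / (k + 1) = q at hlt hle ⊢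
    rw [show M + m - (M + (m - (i + 1)) - q) = i + 1 + q by omega]
    exact hinit _ (by omega) (by omega)
  have hsum := Nat.sum_range_succ_sub_div hkm
  rw [sum_range_succ', Nat.sub_zero] at hsum
  rw [hrec _ (by omega) (by omega), sum_Icc_one_eq_sum_range, sum_congr rfl hterm,
    sum_add_distrib, sum_add_distrib, hM, sum_const, card_range, smul_eq_mul, mul_one]
  omega

theorem recurrence_apply_block {a b : ℕ} (hb : b ≤ k) (hab : a * (k + 1) + b < M * (k + 1) + k) :
    B (M + (a * (k + 1) + b)) = M + a * k + b := by
  rw [recurrence_apply_eq_sub_div hM hM0 hinit hrec _ hab, add_comm (a * (k + 1)),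
    Nat.add_mul_div_right _ _ k.add_one_pos, Nat.div_eq_of_lt (by omega)]
  have : a * (k + 1) = a * k + a := by ring
  omega

end Recurrence

theorem stmt_13_general (k N : ℕ) (hk : 4 ≤ k) (hN : N = (k ^ 2 + k) / 2) (B : ℕ → ℕ)
    (hinit : ∀ i, 1 ≤ i → i ≤ N - 1 → B i = i)
    (hrec : ∀ n, N ≤ n → n < N + (N - k) * (k + 1) →
      B n = ∑ i ∈ Finset.Icc 1 k, B (n - B (n - i)))
    (q r : ℤ) (hr1 : 1 ≤ r) (hr2 : r ≤ (k : ℤ) + 1)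
    (hlo : -(k : ℤ) ≤ q * ((k : ℤ) + 1) + r)
    (hhi : q * ((k : ℤ) + 1) + r < ((N : ℤ) - k) * ((k : ℤ) + 1)) :
    (B (((N : ℤ) + q * ((k : ℤ) + 1) + r).toNat) : ℤ) = (N : ℤ) + q * k + r - 1 := by
  set M := ∑ i ∈ range k, i with hM
  have hNM : N = M + k := by
    have h := sum_range_id (k + 1)
    rw [sum_range_succ, Nat.add_sub_cancel] at h
    rw [hN, h]
    ring_nf
  have hM0 : 0 < M :=
    single_le_sum (f := fun i => i) (fun _ _ => Nat.zero_le _) (mem_range.2 (by omega : 1 < k))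
  have hq : -1 ≤ q := by nlinarith
  obtain ⟨a, rfl⟩ : ∃ a : ℕ, q = a - 1 := ⟨(q + 1).toNat, by omega⟩
  obtain ⟨b, rfl⟩ : ∃ b : ℕ, r = b + 1 := ⟨(r - 1).toNat, by omega⟩
  have hNk : N - k = M := by omega
  rw [hNk] at hrec
  push_cast [hNM] at hhi ⊢
  have hab : a * (k + 1) + b < M * (k + 1) + k := by zify; linarith
  have harg : ((M : ℤ) + k + (a - 1) * (k + 1) + (b + 1)).toNat = M + (a * (k + 1) + b) := by
    rw [← Int.toNat_natCast (M + (a * (k + 1) + b))]; push_cast; ring_nf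
  rw [harg, recurrence_apply_block hM.symm hM0 (fun i h1 h2 => hinit i h1 (by omega))
    (fun n h1 h2 => hrec n (by omega) (by omega)) (by omega) hab]
  push_cast
  ring

/-- with `k ≥ 4`, `N = (k²+k)/2`, `B` satisfying the initial condition and the
`B_k`-recurrence for `N ≤ n < N + (N−k)(k+1)`: for all integers `q, r` with `1 ≤ r ≤ k+1` and
`−k ≤ q(k+1) + r < (N−k)(k+1)`, one has `B (N + q(k+1) + r) = N + qk + r − 1`. -/
theorem stmt_13 (k N : ℕ) (hk : 4 ≤ k) (hN : N = (k ^ 2 + k) / 2) (B : ℕ → ℕ)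
    (hB0 : B 0 = 0)
    (hinit : ∀ i, 1 ≤ i → i ≤ N - 1 → B i = i)
    (hrec : ∀ n, N ≤ n → n < N + (N - k) * (k + 1) →
      B n = ∑ i ∈ Finset.Icc 1 k, B (n - B (n - i)))
    (q r : ℤ) (hr1 : 1 ≤ r) (hr2 : r ≤ (k : ℤ) + 1)
    (hlo : -(k : ℤ) ≤ q * ((k : ℤ) + 1) + r)
    (hhi : q * ((k : ℤ) + 1) + r < ((N : ℤ) - k) * ((k : ℤ) + 1)) :
    (B (((N : ℤ) + q * ((k : ℤ) + 1) + r).toNat) : ℤ) = (N : ℤ) + q * k + r - 1 :=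
  stmt_13_general k N hk hN B hinit hrec q r hr1 hr2 hlo hhi
end

section
/- Let k ≥ 4 be an integer, set N = (k² + k)/2 and A = (N − k + 1)(k + 1). Suppose B : ℕ → ℕ satisfies B(0) = 0, B(i) = i for 1 ≤ i ≤ N − 1, and B(n) = ∑_{i=1}^k B(n − B(n−i)) for all n with N ≤ n ≤ N + A + k − 2. Then for every integer r with 0 ≤ r ≤ k − 2, one has B(N + A + r) = N + (N − k + 1)k + r − 1. -/
/-!
Write `n = N + m`. Throughout the range of the recurrence
`B (N + m) = N + m - ⌈m / (k + 1)⌉ - [m = A]`, by strong induction on `n`. In the `i`-th summand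
the argument `n - B (n - i)` is `i + ⌈(m - i) / (k + 1)⌉ + [m - i = A]`; because
`A = (N - k + 1)(k + 1)` this is at most `N + 1`, with equality exactly when `i = k` and `m ≥ A`,
and `B` is the identity up to `N` while `B (N + 1) = N`. Summing over `i`, the Gauss sum
`1 + ⋯ + k = N` and Hermite's identity `∑_{i=0}^{k} ⌈(m - i) / (k + 1)⌉ = m` give the formula at
`m`. For `m = A + r` the amount subtracted is `N - k + 2`.
-/

open Finset

theorem Nat.sum_range_add_div_eq_self {n : ℕ} (hn : 0 < n) (m : ℕ) :
    ∑ j ∈ range n, (m + j) / n = m := by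
  induction m with
  | zero => exact sum_eq_zero fun j hj => Nat.div_eq_of_lt (by simpa using hj)
  | succ m ih =>
    have h := (sum_range_succ' (fun j => (m + j) / n) n).symm.trans (sum_range_succ _ n)
    simp only [ih, add_zero, Nat.add_div_right m hn, ← add_assoc] at h
    simp only [add_right_comm m 1]
    omega

theorem Nat.sum_range_sub_ceilDiv {n : ℕ} (hn : 0 < n) (m : ℕ) :
    ∑ i ∈ range n, (m - i) ⌈/⌉ n = m := by
  conv_rhs => rw [← Nat.sum_range_add_div_eq_self hn m, ← sum_range_reflect]
  refine sum_congr rfl fun j hj => ?_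
  rw [mem_range] at hj
  rw [Nat.ceilDiv_eq_add_pred_div]
  rcases le_or_gt j m with h | h
  · congr 1; omega
  · rw [Nat.div_eq_of_lt (by omega), Nat.div_eq_of_lt (by omega)]

theorem Finset.sum_range_succ_eq_add_sum_Icc_one {M : Type*} [AddCommMonoid M] (f : ℕ → M)
    (k : ℕ) : ∑ i ∈ range (k + 1), f i = f 0 + ∑ i ∈ Icc 1 k, f i := by
  rw [Nat.range_succ_eq_Icc_zero, ← add_sum_Ioc_eq_sum_Icc k.zero_le, ← Icc_add_one_left_eq_Ioc,
    zero_add]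

theorem Nat.sum_Icc_sub_ceilDiv_add (k m : ℕ) :
    ∑ i ∈ Icc 1 k, (m - i) ⌈/⌉ (k + 1) + m ⌈/⌉ (k + 1) = m := by
  have h := Nat.sum_range_sub_ceilDiv (Nat.add_one_pos k) m
  rw [sum_range_succ_eq_add_sum_Icc_one, Nat.sub_zero] at h
  omega

theorem Nat.sum_Icc_one_id (k : ℕ) : ∑ i ∈ Icc 1 k, i = (k ^ 2 + k) / 2 := by
  have h := sum_range_id_mul_two (k + 1)
  rw [sum_range_succ_eq_add_sum_Icc_one, zero_add, Nat.add_sub_cancel,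
    show (k + 1) * k = k ^ 2 + k by ring] at h
  omega

def defect (k N A n : ℕ) : ℕ := (n - N) ⌈/⌉ (k + 1) + if n = N + A then 1 else 0

section defect

variable {k N A : ℕ}

theorem defect_of_lt (hA : 0 < A) {n : ℕ} (hn : n < N) : defect k N A n = 0 := by
  rw [defect, if_neg (by omega), Nat.sub_eq_zero_of_le hn.le, zero_ceilDiv]

theorem defect_of_le_succ (hA : 2 ≤ A) {n : ℕ} (hn : n ≤ N + 1) : defect k N A n = n - N := by
  rw [defect, if_neg (by omega), add_zero, Nat.ceilDiv_eq_add_pred_div]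
  obtain h | h : n - N = 0 ∨ n - N = 1 := by omega
  · rw [h, Nat.div_eq_of_lt (by omega)]
  · rw [h, Nat.add_sub_cancel_left, Nat.div_self k.add_one_pos]

theorem add_defect_sub_sub_eq_ite (hA : A = (N - k + 1) * (k + 1)) (hkN : k < N) {n i : ℕ}
    (hn : N ≤ n) (hn' : n ≤ N + A + k - 2) (hi : 1 ≤ i) (hi' : i ≤ k) :
    i + defect k N A (n - i) - N = if N + A ≤ n ∧ i = k then 1 else 0 := by
  have hc : ∀ t, (n - i - N) ⌈/⌉ (k + 1) ≤ t ↔ n - i - N ≤ (k + 1) * t :=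
    fun t => ceilDiv_le_iff_le_mul k.add_one_pos
  have hAk : k + 1 ≤ A := hA ▸ Nat.le_mul_of_pos_left _ (by omega)
  have h₁ := hc (N - k)
  have h₂ := hc (N - k + 1)
  have h₃ := hc (N - k + 2)
  rw [mul_comm, ← hA] at h₂
  rw [show N - k = N - k + 1 - 1 by omega, mul_comm, Nat.sub_one_mul, ← hA] at h₁
  rw [show N - k + 2 = N - k + 1 + 1 by omega, mul_comm, Nat.add_one_mul, ← hA] at h₃
  unfold defect
  split_ifs <;> omega

theorem defect_add_add_of_le (hA : A = (N - k + 1) * (k + 1)) {r : ℕ} (hr : r ≤ k) :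
    defect k N A (N + A + r) = N - k + 2 := by
  rw [defect, Nat.ceilDiv_eq_add_pred_div,
    show N + A + r - N + (k + 1) - 1 = (k + 1) * (N - k + 1) + (r + k) by rw [hA]; ring_nf; omega,
    Nat.mul_add_div k.add_one_pos]
  rcases Nat.eq_zero_or_pos r with rfl | hr₀
  · rw [Nat.div_eq_of_lt (by omega), if_pos (by omega)]
  · rw [Nat.div_eq_of_lt_le (k := 1) (by omega) (by omega), if_neg (by omega)]

theorem sum_Icc_defect_sub_add (hkN : k < N) {n : ℕ} (hn : N ≤ n) (hn' : n < N + A + k) :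
    ∑ i ∈ Icc 1 k, defect k N A (n - i) + (n - N) ⌈/⌉ (k + 1) =
      n - N + if N + A < n then 1 else 0 := by
  have hind : ∑ i ∈ Icc 1 k, (if n - i = N + A then 1 else 0) = if N + A < n then 1 else 0 := by
    rw [sum_congr rfl (g := fun i => if n - (N + A) = i then (if N + A < n then 1 else 0) else 0),
      sum_ite_eq]
    · simp only [mem_Icc]
      split_ifs <;> omega
    · intro i hi
      rw [mem_Icc] at hi
      split_ifs <;> omega
  simp only [defect, sum_add_distrib, hind, Nat.sub_right_comm _ _ N]
  have := Nat.sum_Icc_sub_ceilDiv_add k (n - N)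
  omega

theorem add_defect_eq_self_of_recurrence (hsum : ∑ i ∈ Icc 1 k, i = N) (hkN : k < N)
    (hA : A = (N - k + 1) * (k + 1)) (B : ℕ → ℕ)
    (hinit : ∀ i, 1 ≤ i → i ≤ N - 1 → B i = i)
    (hrec : ∀ n, N ≤ n → n ≤ N + A + k - 2 →
      B n = ∑ i ∈ Icc 1 k, B (n - B (n - i))) :
    ∀ n, 1 ≤ n → n ≤ N + A + k - 2 → B n + defect k N A n = n := by
  have hA₂ : 2 ≤ A :=
    hA ▸ (show 2 ≤ N - k + 1 by omega).trans (Nat.le_mul_of_pos_right _ k.add_one_pos)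
  intro n
  induction n using Nat.strong_induction_on with
  | _ n ih =>
  intro hn₁ hn₂
  rcases lt_or_ge n N with hnN | hnN
  · rw [hinit n hn₁ (by omega), defect_of_lt (by omega) hnN, add_zero]
  have hterm : ∀ i ∈ Icc 1 k,
      B (n - B (n - i)) + (if N + A ≤ n ∧ i = k then 1 else 0) = i + defect k N A (n - i) := by
    intro i hi
    rw [mem_Icc] at hi
    have hprev := ih (n - i) (by omega) (by omega) (by omega)
    have harg := add_defect_sub_sub_eq_ite hA hkN hnN hn₂ hi.1 hi.2
    have hlt : i + defect k N A (n - i) < n := by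
      rcases hnN.eq_or_lt with rfl | hnN
      · rw [defect_of_lt (by omega) (by omega)]; omega
      · split_ifs at harg <;> omega
    have hval := ih _ hlt (by omega) (by omega)
    rw [defect_of_le_succ (n := i + defect k N A (n - i)) hA₂ (by split_ifs at harg <;> omega),
      harg] at hval
    rw [show n - B (n - i) = i + defect k N A (n - i) by omega]
    omega
  have hind :
      ∑ i ∈ Icc 1 k, (if N + A ≤ n ∧ i = k then 1 else 0) = if N + A ≤ n then 1 else 0 := by
    by_cases h : N + A ≤ n
    · simp [h, show 1 ≤ k by omega]
    · simp [h]
  have htotal := sum_congr rfl hterm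
  rw [sum_add_distrib, sum_add_distrib, hsum, hind] at htotal
  have hdefects := sum_Icc_defect_sub_add (A := A) hkN hnN (by omega)
  rw [hrec n hnN hn₂, defect]
  split_ifs at htotal hdefects ⊢ <;> omega

end defect

theorem stmt_14_general (k N A : ℕ) (hk : 4 ≤ k) (hN : N = (k ^ 2 + k) / 2)
    (hA : A = (N - k + 1) * (k + 1)) (B : ℕ → ℕ)
    (hinit : ∀ i, 1 ≤ i → i ≤ N - 1 → B i = i)
    (hrec : ∀ n, N ≤ n → n ≤ N + A + k - 2 →
      B n = ∑ i ∈ Finset.Icc 1 k, B (n - B (n - i)))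
    (r : ℕ) (hr : r ≤ k - 2) :
    B (N + A + r) = N + (N - k + 1) * k + r - 1 := by
  have hsum : ∑ i ∈ Icc 1 k, i = N := hN ▸ Nat.sum_Icc_one_id k
  have hkN : k < N := by
    have : 4 * k ≤ k ^ 2 := by nlinarith
    omega
  have h := add_defect_eq_self_of_recurrence hsum hkN hA B hinit hrec (N + A + r)
    (by omega) (by omega)
  rw [defect_add_add_of_le hA (by omega)] at h
  have hA' : A = (N - k + 1) * k + (N - k + 1) := by rw [hA, Nat.mul_succ]
  omega

/-- with `k ≥ 4`, `N = (k²+k)/2`, `A = (N−k+1)(k+1)`, and `B` satisfying the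
initial condition and the `B_k`-recurrence for `N ≤ n ≤ N + A + k − 2`: for every `0 ≤ r ≤ k−2`,
`B (N + A + r) = N + (N−k+1)k + r − 1`. -/
theorem stmt_14 (k N A : ℕ) (hk : 4 ≤ k) (hN : N = (k ^ 2 + k) / 2)
    (hA : A = (N - k + 1) * (k + 1)) (B : ℕ → ℕ)
    (hB0 : B 0 = 0)
    (hinit : ∀ i, 1 ≤ i → i ≤ N - 1 → B i = i)
    (hrec : ∀ n, N ≤ n → n ≤ N + A + k - 2 →
      B n = ∑ i ∈ Finset.Icc 1 k, B (n - B (n - i)))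
    (r : ℕ) (hr : r ≤ k - 2) :
    B (N + A + r) = N + (N - k + 1) * k + r - 1 :=
  stmt_14_general k N A hk hN hA B hinit hrec r hr
end

section
/- Let k ≥ 4 be an integer, set N = (k² + k)/2 and A = (N − k + 1)(k + 1). Suppose B : ℕ → ℕ satisfies B(0) = 0, B(i) = i for 1 ≤ i ≤ N − 1, and B(n) = ∑_{i=1}^k B(n − B(n−i)) for all n with N ≤ n ≤ N + A + k. Then B(N + A + k − 1) = N + (N − k + 1)k + k − 3 and B(N + A + k) = N + (N − k + 1)k + k − 1. -/
/-!
Call `n - B n` the deficit of `B` at `n`; the summand `B (n - B (n - i))` is `B (i + d)`, where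
`d` is the deficit at `n - i`. On `[N, N + A)` the deficit at `N + j` is `⌈j / (k + 1)⌉`: all
the arguments `i + ⌈(j - i) / (k + 1)⌉` then lie in `[1, N]`, where `B` is
the identity, and Hermite's identity `∑_{t < m} ⌊(c + t) / m⌋ = c` closes the induction.
From `N + A` on the deficit is `N - k + 2`; now a few arguments overshoot to `N + 1` or `N + 2`,
where `B` lags by one, and counting these overshoots gives deficit `N - k + 3` at `N + A + k - 1`
and `N - k + 2` at `N + A + k`.
-/

open Finset

theorem Nat.sum_range_add_div (c : ℕ) {m : ℕ} (hm : 0 < m) :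
    ∑ t ∈ range m, (c + t) / m = c := by
  induction c with
  | zero => exact sum_eq_zero fun t ht => Nat.div_eq_of_lt (by simpa using mem_range.1 ht)
  | succ c ih =>
    have hshift :
        ∑ t ∈ range (m + 1), (c + t) / m = ∑ t ∈ range m, (c + 1 + t) / m + c / m := by
      rw [sum_range_succ', add_zero]
      exact congrArg (· + c / m) (sum_congr rfl fun t _ => by rw [add_right_comm, add_assoc])
    rw [sum_range_succ, ih, Nat.add_div_right c hm] at hshift
    omega

theorem sum_Icc_add_sub_div_add (j k : ℕ) :
    ∑ i ∈ Icc 1 k, (j + k - i) / (k + 1) + (j + k) / (k + 1) = j := by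
  calc ∑ i ∈ Icc 1 k, (j + k - i) / (k + 1) + (j + k) / (k + 1)
      = ∑ t ∈ range (k + 1), (j + (k + 1 - 1 - t)) / (k + 1) := by
        rw [sum_range_succ', ← Ico_add_one_right_eq_Icc, sum_Ico_eq_sum_range,
          Nat.add_sub_cancel]
        congr 1
        exact sum_congr rfl fun t ht => by rw [mem_range] at ht; congr 1; omega
    _ = j := by
        rw [sum_range_reflect (fun t => (j + t) / (k + 1)) (k + 1),
          Nat.sum_range_add_div j k.succ_pos]

theorem sum_Icc_id_mul_two (k : ℕ) : (∑ i ∈ Icc 1 k, i) * 2 = k * (k + 1) := by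
  induction k with
  | zero => simp
  | succ k ih => rw [sum_Icc_succ_top (by omega), add_mul, ih]; ring

theorem lt_sum_Icc_id {k : ℕ} (hk : 2 ≤ k) : k < ∑ i ∈ Icc 1 k, i := by
  have := sum_Icc_id_mul_two k
  nlinarith

theorem sum_Icc_ite_eq {k a : ℕ} (ha : 1 ≤ a) (hak : a ≤ k) (c : ℕ) :
    ∑ i ∈ Icc 1 k, (if i = a then c else 0) = c := by
  rw [sum_ite_eq', if_pos (mem_Icc.2 ⟨ha, hak⟩)]

theorem sum_Icc_ite_le {k t : ℕ} (ht : t ≤ k) :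
    ∑ i ∈ Icc 1 k, (if i ≤ t then 1 else 0) = t := by
  have hfilter : {i ∈ Icc 1 k | i ≤ t} = Icc 1 t := by
    ext i
    simp only [mem_filter, mem_Icc]
    omega
  rw [sum_boole, hfilter, Nat.card_Icc, Nat.add_sub_cancel, Nat.cast_id]

structure IsBkSolutionOn (k N M : ℕ) (B : ℕ → ℕ) : Prop where
  apply_eq_self : ∀ i, 1 ≤ i → i ≤ N - 1 → B i = i
  apply_eq_sum : ∀ n, N ≤ n → n ≤ M → B n = ∑ i ∈ Icc 1 k, B (n - B (n - i))

namespace IsBkSolutionOn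

variable {k N M : ℕ} {B : ℕ → ℕ}

theorem apply_add_sum_eq (hB : IsBkSolutionOn k N M B) (hN : ∑ i ∈ Icc 1 k, i = N) {n : ℕ}
    (hNn : N ≤ n) (hnM : n ≤ M) (c : ℕ) (x z : ℕ → ℕ)
    (h : ∀ i ∈ Icc 1 k, B (n - B (n - i)) + x i = i + c + z i) :
    B n + ∑ i ∈ Icc 1 k, x i = N + k * c + ∑ i ∈ Icc 1 k, z i := by
  rw [hB.apply_eq_sum n hNn hnM, ← sum_add_distrib, sum_congr rfl h, sum_add_distrib,
    sum_add_distrib, hN, sum_const, Nat.card_Icc, smul_eq_mul, Nat.add_sub_cancel]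

theorem apply_self (hB : IsBkSolutionOn k N M B) (hN : ∑ i ∈ Icc 1 k, i = N) (hk : 2 ≤ k)
    (hNM : N ≤ M) : B N = N := by
  have hkN : k < N := hN ▸ lt_sum_Icc_id hk
  rw [hB.apply_eq_sum N le_rfl hNM]
  conv_rhs => rw [← hN]
  refine sum_congr rfl fun i hi => ?_
  rw [mem_Icc] at hi
  rw [hB.apply_eq_self (N - i) (by omega) (by omega), Nat.sub_sub_self (by omega),
    hB.apply_eq_self i (by omega) (by omega)]

theorem apply_eq_self_of_le (hB : IsBkSolutionOn k N M B) (hN : ∑ i ∈ Icc 1 k, i = N)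
    (hk : 2 ≤ k) (hNM : N ≤ M) {m : ℕ} (hm : 1 ≤ m) (hmN : m ≤ N) : B m = m := by
  rcases hmN.lt_or_eq with hlt | rfl
  · exact hB.apply_eq_self m hm (by omega)
  · exact hB.apply_self hN hk hNM

-- `(j + k) / (k + 1) = ⌈j / (k + 1)⌉`
theorem apply_add_of_lt (hB : IsBkSolutionOn k N M B) (hN : ∑ i ∈ Icc 1 k, i = N) (hk : 2 ≤ k)
    {j : ℕ} (hj : j < (N - k + 1) * (k + 1)) (hjM : N + j ≤ M) :
    B (N + j) + (j + k) / (k + 1) = N + j := by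
  induction j using Nat.strong_induction_on with
  | _ j IH =>
  have hkN : k < N := hN ▸ lt_sum_Icc_id hk
  have hsummand : ∀ i ∈ Icc 1 k,
      B (N + j - B (N + j - i)) + 0 = i + 0 + (j + k - i) / (k + 1) := by
    intro i hi
    rw [Finset.mem_Icc] at hi
    have harg : N + j - B (N + j - i) = i + (j + k - i) / (k + 1) := by
      rcases le_or_gt i j with hij | hij
      · have h := IH (j - i) (by omega) (by omega) (by omega)
        rw [show j - i + k = j + k - i by omega] at h
        rw [show N + j - i = N + (j - i) by omega]
        generalize (j + k - i) / (k + 1) = q at h ⊢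
        omega
      · rw [hB.apply_eq_self (N + j - i) (by omega) (by omega),
          Nat.div_eq_of_lt (show j + k - i < k + 1 by omega)]
        omega
    have hdiv : (j + k - i) / (k + 1) < N - i + 1 := by
      refine Nat.div_lt_of_lt_mul ?_
      have hsplit : (k + 1) * (N - i + 1) = (N - k + 1) * (k + 1) + (k + 1) * (k - i) := by
        rw [show N - i + 1 = (N - k + 1) + (k - i) by omega]
        ring
      have : k - i ≤ (k + 1) * (k - i) := Nat.le_mul_of_pos_left _ k.succ_pos
      omega
    generalize (j + k - i) / (k + 1) = q at harg hdiv ⊢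
    rw [harg, hB.apply_eq_self_of_le hN hk (m := i + q) (by omega) (by omega) (by omega), add_zero,
      add_zero]
  have hsum := hB.apply_add_sum_eq hN (n := N + j) (by omega) hjM 0 (fun _ => 0) _ hsummand
  have hdivsum := sum_Icc_add_sub_div_add j k
  simp only [sum_const_zero, add_zero, mul_zero] at hsum
  omega

theorem apply_add_one_of_lt (hB : IsBkSolutionOn k N M B) (hN : ∑ i ∈ Icc 1 k, i = N)
    (hk : 2 ≤ k) {m : ℕ} (hNm : N < m) (hm : m ≤ N + 2) (hmM : m ≤ M) : B m + 1 = m := by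
  obtain ⟨j, rfl⟩ : ∃ j, m = N + j := ⟨m - N, by omega⟩
  have hj : j < (N - k + 1) * (k + 1) := by
    have : k + 1 ≤ (N - k + 1) * (k + 1) := Nat.le_mul_of_pos_left _ (by omega)
    omega
  have h := hB.apply_add_of_lt hN hk hj hmM
  rwa [Nat.div_eq_of_lt_le (k := 1) (by omega) (by omega)] at h

variable {A : ℕ}

theorem apply_sub_of_le (hB : IsBkSolutionOn k N M B) (hN : ∑ i ∈ Icc 1 k, i = N)
    (hk : 2 ≤ k) (hA : A = (N - k + 1) * (k + 1)) (hAM : N + A ≤ M) {d : ℕ} (hd : 1 ≤ d)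
    (hdk : d ≤ k) : B (N + A - d) + (N - k + 1) = N + A - d := by
  have hkA : k + 1 ≤ A := hA ▸ Nat.le_mul_of_pos_left _ (by omega)
  have h := hB.apply_add_of_lt hN hk (j := A - d) (by omega) (by omega)
  rwa [show A - d + k = k - d + (N - k + 1) * (k + 1) by omega,
    Nat.add_mul_div_right _ _ k.succ_pos, Nat.div_eq_of_lt (by omega), zero_add,
    ← Nat.add_sub_assoc (by omega)] at h

theorem apply_add_add_of_le (hB : IsBkSolutionOn k N (N + A + k) B)
    (hN : ∑ i ∈ Icc 1 k, i = N) (hk : 2 ≤ k) (hA : A = (N - k + 1) * (k + 1)) {t : ℕ}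
    (ht : t ≤ k - 2) : B (N + A + t) + (N - k + 2) = N + A + t := by
  induction t using Nat.strong_induction_on with
  | _ t IH =>
  have hkN : k < N := hN ▸ lt_sum_Icc_id hk
  have hsummand : ∀ i ∈ Icc 1 k, B (N + A + t - B (N + A + t - i)) + (if i = k then 1 else 0)
      = i + (N - k + 1) + (if i ≤ t then 1 else 0) := by
    intro i hi
    rw [Finset.mem_Icc] at hi
    rcases le_or_gt i t with hit | hit
    · have h := IH (t - i) (by omega) (by omega)
      rw [show N + A + t - i = N + A + (t - i) by omega,
        show N + A + t - B (N + A + (t - i)) = i + (N - k + 2) by omega,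
        hB.apply_eq_self_of_le hN hk (by omega) (by omega) (by omega)]
      split_ifs <;> omega
    · have h := hB.apply_sub_of_le hN hk hA (by omega) (d := i - t) (by omega) (by omega)
      rw [show N + A + t - i = N + A - (i - t) by omega,
        show N + A + t - B (N + A - (i - t)) = i + (N - k + 1) by omega]
      rcases hi.2.lt_or_eq with hik | hik
      · rw [hB.apply_eq_self_of_le hN hk (by omega) (by omega) (by omega)]
        split_ifs <;> omega
      · have := hB.apply_add_one_of_lt hN hk (m := i + (N - k + 1)) (by omega) (by omega)
          (by omega)
        split_ifs <;> omega
  have hsum := hB.apply_add_sum_eq hN (n := N + A + t) (by omega) (by omega) _ _ _ hsummand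
  rw [sum_Icc_ite_eq (by omega) le_rfl, sum_Icc_ite_le (by omega)] at hsum
  have hA' : A = k * (N - k + 1) + (N - k + 1) := by rw [hA]; ring
  omega

theorem apply_add_add_sub_one (hB : IsBkSolutionOn k N (N + A + k) B)
    (hN : ∑ i ∈ Icc 1 k, i = N) (hk : 3 ≤ k) (hA : A = (N - k + 1) * (k + 1)) :
    B (N + A + (k - 1)) + (N - k + 3) = N + A + (k - 1) := by
  have hkN : k < N := hN ▸ lt_sum_Icc_id (by omega)
  have hsummand : ∀ i ∈ Icc 1 k, B (N + A + (k - 1) - B (N + A + (k - 1) - i))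
      + ((if i = k - 1 then 1 else 0) + (if i = k then 2 else 0)) = i + (N - k + 2) + 0 := by
    intro i hi
    rw [Finset.mem_Icc] at hi
    rcases hi.2.lt_or_eq with hik | hik
    · have h := hB.apply_add_add_of_le hN (by omega) hA (t := k - 1 - i) (by omega)
      rw [show N + A + (k - 1) - i = N + A + (k - 1 - i) by omega,
        show N + A + (k - 1) - B (N + A + (k - 1 - i)) = i + (N - k + 2) by omega]
      rcases (show i < k - 1 ∨ i = k - 1 by omega) with hik' | hik'
      · rw [hB.apply_eq_self_of_le hN (by omega) (by omega) (by omega) (by omega)]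
        split_ifs <;> omega
      · have := hB.apply_add_one_of_lt hN (by omega) (m := i + (N - k + 2)) (by omega)
          (by omega) (by omega)
        split_ifs <;> omega
    · have h := hB.apply_sub_of_le hN (by omega) hA (by omega) (d := 1) le_rfl (by omega)
      rw [hik, show N + A + (k - 1) - k = N + A - 1 by omega,
        show N + A + (k - 1) - B (N + A - 1) = N + 1 by omega]
      have := hB.apply_add_one_of_lt hN (by omega) (m := N + 1) (by omega) (by omega) (by omega)
      split_ifs <;> omega
  have hsum := hB.apply_add_sum_eq hN (n := N + A + (k - 1)) (by omega) (by omega) _ _ _ hsummand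
  rw [sum_add_distrib, sum_Icc_ite_eq (by omega) (by omega), sum_Icc_ite_eq (by omega) le_rfl,
    sum_const_zero] at hsum
  have hA' : A = k * (N - k + 1) + (N - k + 1) := by rw [hA]; ring
  have hk2 : k * (N - k + 2) = k * (N - k + 1) + k := by ring
  omega

theorem apply_add_add_self (hB : IsBkSolutionOn k N (N + A + k) B)
    (hN : ∑ i ∈ Icc 1 k, i = N) (hk : 4 ≤ k) (hA : A = (N - k + 1) * (k + 1)) :
    B (N + A + k) + (N - k + 2) = N + A + k := by
  have hkN : k < N := hN ▸ lt_sum_Icc_id (by omega)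
  have hsummand : ∀ i ∈ Icc 1 k, B (N + A + k - B (N + A + k - i))
      + ((if i = k - 1 then 1 else 0) + (if i = k then 1 else 0))
      = i + (N - k + 2) + (if i = 1 then 1 else 0) := by
    intro i hi
    rw [Finset.mem_Icc] at hi
    rcases hi.1.eq_or_lt with hi1 | hi1
    · have h := hB.apply_add_add_sub_one hN (by omega) hA
      rw [← hi1, show N + A + k - 1 = N + A + (k - 1) by omega,
        show N + A + k - B (N + A + (k - 1)) = N - k + 4 by omega,
        hB.apply_eq_self_of_le hN (by omega) (by omega) (by omega) (by omega)]
      split_ifs <;> omega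
    · have h := hB.apply_add_add_of_le hN (by omega) hA (t := k - i) (by omega)
      rw [show N + A + k - i = N + A + (k - i) by omega,
        show N + A + k - B (N + A + (k - i)) = i + (N - k + 2) by omega]
      rcases (show i < k - 1 ∨ k - 1 ≤ i by omega) with hik | hik
      · rw [hB.apply_eq_self_of_le hN (by omega) (by omega) (by omega) (by omega)]
        split_ifs <;> omega
      · have := hB.apply_add_one_of_lt hN (by omega) (m := i + (N - k + 2)) (by omega)
          (by omega) (by omega)
        split_ifs <;> omega
  have hsum := hB.apply_add_sum_eq hN (n := N + A + k) (by omega) le_rfl _ _ _ hsummand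
  rw [sum_add_distrib, sum_Icc_ite_eq (by omega) (by omega), sum_Icc_ite_eq (by omega) le_rfl,
    sum_Icc_ite_eq le_rfl (by omega)] at hsum
  have hA' : A = k * (N - k + 1) + (N - k + 1) := by rw [hA]; ring
  have hk2 : k * (N - k + 2) = k * (N - k + 1) + k := by ring
  omega

end IsBkSolutionOn

theorem stmt_15_general (k N A : ℕ) (hk : 4 ≤ k) (hN : N = (k ^ 2 + k) / 2)
    (hA : A = (N - k + 1) * (k + 1)) (B : ℕ → ℕ)
    (hinit : ∀ i, 1 ≤ i → i ≤ N - 1 → B i = i)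
    (hrec : ∀ n, N ≤ n → n ≤ N + A + k →
      B n = ∑ i ∈ Finset.Icc 1 k, B (n - B (n - i))) :
    B (N + A + k - 1) = N + (N - k + 1) * k + k - 3 ∧
    B (N + A + k) = N + (N - k + 1) * k + k - 1 := by
  have hsum : ∑ i ∈ Icc 1 k, i = N := by
    have := sum_Icc_id_mul_two k
    rw [hN, show k ^ 2 + k = k * (k + 1) by ring]
    omega
  have hB : IsBkSolutionOn k N (N + A + k) B := ⟨hinit, hrec⟩
  have hpen := hB.apply_add_add_sub_one hsum (by omega) hA
  have hlast := hB.apply_add_add_self hsum hk hA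
  have hA' : A = (N - k + 1) * k + (N - k + 1) := by rw [hA]; ring
  rw [show N + A + k - 1 = N + A + (k - 1) by omega]
  constructor <;> omega

/-- with `k ≥ 4`, `N = (k²+k)/2`, `A = (N−k+1)(k+1)`, and `B` satisfying the
initial condition and the `B_k`-recurrence for `N ≤ n ≤ N + A + k`:
`B (N + A + k − 1) = N + (N−k+1)k + k − 3` and `B (N + A + k) = N + (N−k+1)k + k − 1`. -/
theorem stmt_15 (k N A : ℕ) (hk : 4 ≤ k) (hN : N = (k ^ 2 + k) / 2)
    (hA : A = (N - k + 1) * (k + 1)) (B : ℕ → ℕ)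
    (hB0 : B 0 = 0)
    (hinit : ∀ i, 1 ≤ i → i ≤ N - 1 → B i = i)
    (hrec : ∀ n, N ≤ n → n ≤ N + A + k →
      B n = ∑ i ∈ Finset.Icc 1 k, B (n - B (n - i))) :
    B (N + A + k - 1) = N + (N - k + 1) * k + k - 3 ∧
    B (N + A + k) = N + (N - k + 1) * k + k - 1 :=
  stmt_15_general k N A hk hN hA B hinit hrec
end
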